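/- For any processes P, Q ∈ pCSP: if ⟦P⟧ ⊨ φ_⟦Q⟧ then P ⊑_FS Q; and if ⟦Q⟧ ⊨ ψ_⟦P⟧ then P ⊑_S Q. -/

import Mathlib

open Classical

noncomputable section

namespace PaperPCSP

/-! ### Finitely supported distributions as weight functions -/

/-- Weight functions on `X`; probability distributions are those satisfying `IsDist`. -/
abbrev Wt (X : Type) := X → ℝ

/-- The support of a weight function. -/
def dsupp {X : Type} (Δ : Wt X) : Set X := Function.support Δ

/-- `Δ` is a finitely supported probability distribution. -/
def IsDist {X : Type} (Δ : Wt X) : Prop :=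
  (∀ x, 0 ≤ Δ x) ∧ (dsupp Δ).Finite ∧ ∑ᶠ x, Δ x = 1

/-- The point distribution at `x`. -/
def dirac {X : Type} (x : X) : Wt X := fun y => if y = x then 1 else 0

/-- Pushforward of a weight function along a map. -/
def dmap {X Y : Type} (g : X → Y) (Δ : Wt X) : Wt Y :=
  fun y => ∑ᶠ x ∈ {x | g x = y}, Δ x

/-- Expected value of `f` under `Δ`. -/
def dexp {X : Type} (Δ : Wt X) (f : X → ℝ) : ℝ := ∑ᶠ x, Δ x * f x

/-! ### Syntax of pCSP -/

mutual
/-- Process terms of pCSP (over prefix alphabet `A`). -/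
inductive PCSP (A : Type) : Type where
  | st : SCSP A → PCSP A
  | pch : ℝ → PCSP A → PCSP A → PCSP A
/-- State-based process terms of pCSP. -/
inductive SCSP (A : Type) : Type where
  | nil : SCSP A
  | pre : A → PCSP A → SCSP A
  | ich : PCSP A → PCSP A → SCSP A
  | ech : SCSP A → SCSP A → SCSP A
  | par : Set A → SCSP A → SCSP A → SCSP A
end

mutual
/-- Well-formedness: all probabilistic choices have `p ∈ (0,1)`.  `pCSP` proper
consists of the well-formed terms. -/
inductive PWF : {A : Type} → PCSP A → Prop where
  | st {A} {s : SCSP A} : SWF s → PWF (.st s)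
  | pch {A} {p : ℝ} {P Q : PCSP A} : 0 < p → p < 1 → PWF P → PWF Q → PWF (.pch p P Q)
inductive SWF : {A : Type} → SCSP A → Prop where
  | nil {A} : SWF (SCSP.nil (A := A))
  | pre {A} {a : A} {P} : PWF P → SWF (.pre a P)
  | ich {A} {P Q : PCSP A} : PWF P → PWF Q → SWF (.ich P Q)
  | ech {A} {s t : SCSP A} : SWF s → SWF t → SWF (.ech s t)
  | par {A} {B : Set A} {s t : SCSP A} : SWF s → SWF t → SWF (.par B s t)
end

/-- Interpretation of process terms as distributions over state-based terms. -/
def PCSP.interp {A : Type} : PCSP A → Wt (SCSP A)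
  | .st s => dirac s
  | .pch p P Q => fun t => p * P.interp t + (1 - p) * Q.interp t

/-! ### Operational semantics -/

/-- The probabilistic labelled transition relation; `none` is the internal action τ. -/
inductive Step {A : Type} : SCSP A → Option A → Wt (SCSP A) → Prop where
  | pre (a : A) (P : PCSP A) : Step (.pre a P) (some a) P.interp
  | ichL (P Q : PCSP A) : Step (.ich P Q) none P.interp
  | ichR (P Q : PCSP A) : Step (.ich P Q) none Q.interp
  | echL {s₁ s₂ : SCSP A} {a : A} {Δ} :
      Step s₁ (some a) Δ → Step (.ech s₁ s₂) (some a) Δ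
  | echR {s₁ s₂ : SCSP A} {a : A} {Δ} :
      Step s₂ (some a) Δ → Step (.ech s₁ s₂) (some a) Δ
  | echTL {s₁ s₂ : SCSP A} {Δ} :
      Step s₁ none Δ → Step (.ech s₁ s₂) none (dmap (fun t => .ech t s₂) Δ)
  | echTR {s₁ s₂ : SCSP A} {Δ} :
      Step s₂ none Δ → Step (.ech s₁ s₂) none (dmap (fun t => .ech s₁ t) Δ)
  | parL {B : Set A} {s₁ s₂ : SCSP A} {α : Option A} {Δ} :
      Step s₁ α Δ → (∀ a, α = some a → a ∉ B) →
      Step (.par B s₁ s₂) α (dmap (fun t => .par B t s₂) Δ)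
  | parR {B : Set A} {s₁ s₂ : SCSP A} {α : Option A} {Δ} :
      Step s₂ α Δ → (∀ a, α = some a → a ∉ B) →
      Step (.par B s₁ s₂) α (dmap (fun t => .par B s₁ t) Δ)
  | parS {B : Set A} {s₁ s₂ : SCSP A} {a : A} {Δ₁ Δ₂} :
      a ∈ B → Step s₁ (some a) Δ₁ → Step s₂ (some a) Δ₂ →
      Step (.par B s₁ s₂) none
        (dmap (fun q : SCSP A × SCSP A => .par B q.1 q.2) (fun q => Δ₁ q.1 * Δ₂ q.2))

/-! ### Lifting relations to distributions, weak transitions -/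

/-- Lifting of a state-vs-distribution relation to distributions. -/
def Lift {A : Type} (R : SCSP A → Wt (SCSP A) → Prop) (Δ Θ : Wt (SCSP A)) : Prop :=
  ∃ (n : ℕ) (p : Fin n → ℝ) (s : Fin n → SCSP A) (Φ : Fin n → Wt (SCSP A)),
    (∀ i, 0 ≤ p i) ∧ (∑ i, p i = 1) ∧
    (Δ = fun t => ∑ i, p i * dirac (s i) t) ∧
    (∀ i, R (s i) (Φ i)) ∧
    (Θ = fun t => ∑ i, p i * Φ i t)

/-- The transition relation lifted to distributions. -/
def StepD {A : Type} (α : Option A) : Wt (SCSP A) → Wt (SCSP A) → Prop :=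
  Lift (fun s Δ => Step s α Δ)

/-- `s --τ̂--> Δ` : a τ-step or staying put. -/
def stepTauHat {A : Type} (s : SCSP A) (Δ : Wt (SCSP A)) : Prop :=
  Step s none Δ ∨ Δ = dirac s

/-- `==τ̂==>` : reflexive-transitive closure of the lifted `--τ̂-->`. -/
def TauStar {A : Type} : Wt (SCSP A) → Wt (SCSP A) → Prop :=
  Relation.ReflTransGen (Lift stepTauHat)

/-- `Δ ==â==> Θ` for a visible action `a`. -/
def WeakA {A : Type} (a : A) (Δ Θ : Wt (SCSP A)) : Prop :=
  ∃ Δ₁ Δ₂, TauStar Δ Δ₁ ∧ StepD (some a) Δ₁ Δ₂ ∧ TauStar Δ₂ Θ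

/-- `Δ ==α̂==> Θ`, which is `==τ̂==>` when `α = τ`. -/
def Weak {A : Type} : Option A → Wt (SCSP A) → Wt (SCSP A) → Prop
  | none => TauStar
  | some a => WeakA a

/-- `s ↛X` : the state `s` enables no action from `X ∪ {τ}`. -/
def SRefuses {A : Type} (s : SCSP A) (X : Set A) : Prop :=
  (∀ Δ, ¬ Step s none Δ) ∧ ∀ a ∈ X, ∀ Δ, ¬ Step s (some a) Δ

/-- `Δ ↛X` : every state in the support of `Δ` refuses `X`. -/
def DRefuses {A : Type} (Δ : Wt (SCSP A)) (X : Set A) : Prop :=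
  ∀ s ∈ dsupp Δ, SRefuses s X

/-! ### Simulation and failure simulation -/

/-- `R` is a simulation. -/
def IsSimulation {A : Type} (R : SCSP A → Wt (SCSP A) → Prop) : Prop :=
  ∀ s Θ α Δ, R s Θ → Step s α Δ → ∃ Θ', Weak α Θ Θ' ∧ Lift R Δ Θ'

/-- `R` is a failure simulation. -/
def IsFailureSim {A : Type} (R : SCSP A → Wt (SCSP A) → Prop) : Prop :=
  IsSimulation R ∧
  ∀ s Θ (X : Set A), R s Θ → SRefuses s X → ∃ Θ', TauStar Θ Θ' ∧ DRefuses Θ' X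

/-- `s ⊲_S Θ`. -/
def simLE {A : Type} (s : SCSP A) (Θ : Wt (SCSP A)) : Prop :=
  ∃ R, IsSimulation R ∧ R s Θ

/-- `s ⊲_FS Θ`. -/
def fsimLE {A : Type} (s : SCSP A) (Θ : Wt (SCSP A)) : Prop :=
  ∃ R, IsFailureSim R ∧ R s Θ

/-- The simulation preorder `P ⊑_S Q`. -/
def SimPre {A : Type} (P Q : PCSP A) : Prop :=
  ∃ Θ, TauStar Q.interp Θ ∧ Lift simLE P.interp Θ

/-- The failure simulation preorder `P ⊑_FS Q`. -/
def FSimPre {A : Type} (P Q : PCSP A) : Prop :=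
  ∃ Θ, TauStar P.interp Θ ∧ Lift fsimLE Q.interp Θ
/-! ### Syntactic operations: renaming, and ◻ / ∥ distributed over probabilistic choice -/

mutual
/-- Renaming of actions in a process term. -/
def mapP {A B : Type} (f : A → B) : PCSP A → PCSP B
  | .st s => .st (mapS f s)
  | .pch p P Q => .pch p (mapP f P) (mapP f Q)
def mapS {A B : Type} (f : A → B) : SCSP A → SCSP B
  | .nil => .nil
  | .pre a P => .pre (f a) (mapP f P)
  | .ich P Q => .ich (mapP f P) (mapP f Q)
  | .ech s t => .ech (mapS f s) (mapS f t)
  | .par X s t => .par (f '' X) (mapS f s) (mapS f t)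
end

/-- `s ∥_B Q` for a state `s`, distributing over probabilistic choice. -/
def parCS {A : Type} (B : Set A) (s : SCSP A) : PCSP A → PCSP A
  | .st t => .st (.par B s t)
  | .pch p Q₁ Q₂ => .pch p (parCS B s Q₁) (parCS B s Q₂)

/-- `P ∥_B Q` on processes, distributing over probabilistic choice. -/
def parC {A : Type} (B : Set A) : PCSP A → PCSP A → PCSP A
  | .st s, Q => parCS B s Q
  | .pch p P₁ P₂, Q => .pch p (parC B P₁ Q) (parC B P₂ Q)

/-- `s ◻ Q` for a state `s`, distributing over probabilistic choice. -/
def echCS {A : Type} (s : SCSP A) : PCSP A → PCSP A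
  | .st t => .st (.ech s t)
  | .pch p Q₁ Q₂ => .pch p (echCS s Q₁) (echCS s Q₂)

/-- `P ◻ Q` on processes, distributing over probabilistic choice. -/
def echC {A : Type} : PCSP A → PCSP A → PCSP A
  | .st s, Q => echCS s Q
  | .pch p P₁ P₂, Q => .pch p (echC P₁ Q) (echC P₂ Q)

/-- Finite (nonempty) indexed internal choice `⨅_{i} P i`. -/
def ichFin {A : Type} : (n : ℕ) → (Fin (n+1) → PCSP A) → PCSP A
  | 0, P => P 0
  | n+1, P => .st (.ich (P 0) (ichFin n (fun i => P i.succ)))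

/-- Finite (nonempty) indexed probabilistic choice `⊕_{i} p i · P i`. -/
def pchFin {A : Type} : (n : ℕ) → (Fin (n+1) → ℝ) → (Fin (n+1) → PCSP A) → PCSP A
  | 0, _, P => P 0
  | n+1, p, P => .pch (p 0) (P 0)
      (pchFin n (fun i => p i.succ / (1 - p 0)) (fun i => P i.succ))

/-- Finite (nonempty) indexed external choice of states `◻_{i} s i`. -/
def echFin {A : Type} : (n : ℕ) → (Fin (n+1) → SCSP A) → SCSP A
  | 0, s => s 0
  | n+1, s => .ech (s 0) (echFin n (fun i => s i.succ))

/-- External choice of a list of states (empty list gives `0`). -/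
def echList {A : Type} : List (SCSP A) → SCSP A
  | [] => .nil
  | s :: l => .ech s (echList l)

/-! ### State-based scalar testing -/

/-- The alphabet `Act ∪ {ω}` for ordinary (scalar) tests. -/
abbrev TAct (A : Type) := Sum A Unit

/-- The success action ω. -/
def omA {A : Type} : TAct A := Sum.inr ()

/-- Membership in the state-based results-gathering function `V` (with success action `w`). -/
inductive VMem {B : Type} (w : B) : SCSP B → ℝ → Prop where
  | succ {s : SCSP B} {Δ} : Step s (some w) Δ → VMem w s 1
  | step {s : SCSP B} {α : Option B} {Δ} (f : SCSP B → ℝ) :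
      (∀ Θ, ¬ Step s (some w) Θ) → Step s α Δ →
      (∀ t ∈ dsupp Δ, VMem w t (f t)) → VMem w s (dexp Δ f)
  | stuck {s : SCSP B} : (∀ α Δ, ¬ Step s α Δ) → VMem w s 0

/-- `V(Δ)` : the set of outcomes of a distribution, via choice functions. -/
def VD {B : Type} (w : B) (Δ : Wt (SCSP B)) : Set ℝ :=
  {r | ∃ f : SCSP B → ℝ, (∀ t ∈ dsupp Δ, VMem w t (f t)) ∧ r = dexp Δ f}

/-- The application `T ∥_Act P` of a test to a process. -/
def applyTest {A : Type} (T : PCSP (TAct A)) (P : PCSP A) : PCSP (TAct A) :=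
  parC (Set.range Sum.inl) T (mapP Sum.inl P)

/-- `A(T,P)` : state-based testing outcomes. -/
def Aset {A : Type} (T : PCSP (TAct A)) (P : PCSP A) : Set ℝ :=
  VD omA (applyTest T P).interp

/-- The Hoare preorder on sets of reals. -/
def HoareLE (X Y : Set ℝ) : Prop := ∀ x ∈ X, ∃ y ∈ Y, x ≤ y

/-- The Smyth preorder on sets of reals. -/
def SmythLE (X Y : Set ℝ) : Prop := ∀ y ∈ Y, ∃ x ∈ X, x ≤ y

/-- The may-testing preorder `⊑_pmay`. -/
def PMay {A : Type} (P Q : PCSP A) : Prop :=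
  ∀ T : PCSP (TAct A), PWF T → HoareLE (Aset T P) (Aset T Q)

/-- The must-testing preorder `⊑_pmust`. -/
def PMust {A : Type} (P Q : PCSP A) : Prop :=
  ∀ T : PCSP (TAct A), PWF T → SmythLE (Aset T P) (Aset T Q)

/-! ### Action-based scalar testing -/

/-- Membership in the action-based results-gathering function `V̄`. -/
inductive VBarMem {B : Type} (w : B) : SCSP B → ℝ → Prop where
  | succ {s : SCSP B} {Δ} : Step s (some w) Δ → VBarMem w s 1
  | step {s : SCSP B} {α : Option B} {Δ} (f : SCSP B → ℝ) :
      α ≠ some w → Step s α Δ →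
      (∀ t ∈ dsupp Δ, VBarMem w t (f t)) → VBarMem w s (dexp Δ f)
  | stuck {s : SCSP B} : (∀ α Δ, ¬ Step s α Δ) → VBarMem w s 0

/-- `V̄(Δ)`. -/
def VBarD {B : Type} (w : B) (Δ : Wt (SCSP B)) : Set ℝ :=
  {r | ∃ f : SCSP B → ℝ, (∀ t ∈ dsupp Δ, VBarMem w t (f t)) ∧ r = dexp Δ f}

/-- `Ā(T,P)` : action-based testing outcomes. -/
def AsetBar {A : Type} (T : PCSP (TAct A)) (P : PCSP A) : Set ℝ :=
  VBarD omA (applyTest T P).interp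

/-- The action-based may-testing preorder `⊑̄_pmay`. -/
def PMayBar {A : Type} (P Q : PCSP A) : Prop :=
  ∀ T : PCSP (TAct A), PWF T → HoareLE (AsetBar T P) (AsetBar T Q)

/-- The action-based must-testing preorder `⊑̄_pmust`. -/
def PMustBar {A : Type} (P Q : PCSP A) : Prop :=
  ∀ T : PCSP (TAct A), PWF T → SmythLE (AsetBar T P) (AsetBar T Q)
/-! ### ω-avoiding transitions and the relation ⊲ᵉ_FS -/

/-- `s --α-->_ω Δ` : a transition from a state not enabling the success action `w`. -/
def StepOmega {B : Type} (w : B) (s : SCSP B) (α : Option B) (Δ : Wt (SCSP B)) : Prop :=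
  (∀ Θ, ¬ Step s (some w) Θ) ∧ Step s α Δ

/-- `s --τ̂-->_ω Δ`. -/
def stepTauHatOm {B : Type} (w : B) (s : SCSP B) (Δ : Wt (SCSP B)) : Prop :=
  StepOmega w s none Δ ∨ Δ = dirac s

/-- `==τ̂==>_ω`. -/
def TauStarOm {B : Type} (w : B) : Wt (SCSP B) → Wt (SCSP B) → Prop :=
  Relation.ReflTransGen (Lift (stepTauHatOm w))

/-- `==â==>_ω` for a visible action `a`. -/
def WeakAOm {B : Type} (w : B) (a : B) (Δ Θ : Wt (SCSP B)) : Prop :=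
  ∃ Δ₁ Δ₂, TauStarOm w Δ Δ₁ ∧
    Lift (fun s Φ => StepOmega w s (some a) Φ) Δ₁ Δ₂ ∧ TauStarOm w Δ₂ Θ

/-- `==α̂==>_ω`. -/
def WeakOm {B : Type} (w : B) : Option B → Wt (SCSP B) → Wt (SCSP B) → Prop
  | none => TauStarOm w
  | some a => WeakAOm w a

/-- A postfixed point for the coinductive definition of `⊲ᵉ_FS`. -/
def IsEFailSim {B : Type} (w : B) (R : SCSP B → Wt (SCSP B) → Prop) : Prop :=
  (∀ s Θ α Δ, R s Θ → StepOmega w s α Δ → ∃ Θ', WeakOm w α Θ Θ' ∧ Lift R Δ Θ') ∧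
  (∀ s Θ (X : Set B), R s Θ → w ∈ X → SRefuses s X →
    ∃ Θ', TauStarOm w Θ Θ' ∧ DRefuses Θ' X)

/-- `s ⊲ᵉ_FS Θ` : the largest relation satisfying the transfer properties. -/
def efsimLE {B : Type} (w : B) (s : SCSP B) (Θ : Wt (SCSP B)) : Prop :=
  ∃ R, IsEFailSim w R ∧ R s Θ

/-! ### Vector-based testing with success actions from Ω -/

/-- `α!o` : update the `α`-component of the outcome tuple to 1 if `α` is a success action. -/
def bang {A Om : Type} (α : Option (Sum A Om)) (o : Om → ℝ) : Om → ℝ :=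
  fun w => if α = some (Sum.inr w) then 1 else o w

mutual
/-- Membership in the vector-based convex-closed results-gathering function `V̄↕^Ω`
for states.  -/
inductive WMem : {A Om : Type} → SCSP (Sum A Om) → (Om → ℝ) → Prop where
  | stuck {A Om : Type} {s : SCSP (Sum A Om)} :
      (∀ α Δ, ¬ Step s α Δ) → WMem s (fun _ => 0)
  | step {A Om : Type} {s : SCSP (Sum A Om)} {n : ℕ}
      (p : Fin (n+1) → ℝ) (α : Fin (n+1) → Option (Sum A Om))
      (Δ : Fin (n+1) → Wt (SCSP (Sum A Om))) (o : Fin (n+1) → Om → ℝ) :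
      (∀ i, 0 ≤ p i) → (∑ i, p i = 1) →
      (∀ i, Step s (α i) (Δ i)) →
      (∀ i, WMemD (Δ i) (o i)) →
      WMem s (fun w => ∑ i, p i * bang (α i) (o i) w)
/-- Membership in `V̄↕^Ω` for distributions. -/
inductive WMemD : {A Om : Type} → Wt (SCSP (Sum A Om)) → (Om → ℝ) → Prop where
  | mk {A Om : Type} {Δ : Wt (SCSP (Sum A Om))} (f : SCSP (Sum A Om) → Om → ℝ) :
      (∀ t ∈ dsupp Δ, WMem t (f t)) → WMemD Δ (fun w => ∑ᶠ t, Δ t * f t w)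
end

/-- `V̄↕^Ω(Δ)` as a set of outcome tuples. -/
def WsetD {A Om : Type} (Δ : Wt (SCSP (Sum A Om))) : Set (Om → ℝ) :=
  {o | WMemD Δ o}

/-- The application `T ∥_Act P` of an Ω-test to a process. -/
def applyTestO {A Om : Type} (T : PCSP (Sum A Om)) (P : PCSP A) : PCSP (Sum A Om) :=
  parC (Set.range Sum.inl) T (mapP Sum.inl P)

/-- `A↕^Ω(T,P)` : vector-based testing outcomes of a process. -/
def AO {A Om : Type} (T : PCSP (Sum A Om)) (P : PCSP A) : Set (Om → ℝ) :=
  WsetD (applyTestO T P).interp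

/-- `A↕^Ω(T,Δ)` for a distribution `Δ ∈ D(sCSP)`, via expected values. -/
def AOD {A Om : Type} (T : PCSP (Sum A Om)) (Δ : Wt (SCSP A)) : Set (Om → ℝ) :=
  {o | ∃ g : SCSP A → Om → ℝ,
    (∀ s ∈ dsupp Δ, g s ∈ AO T (.st s)) ∧ o = fun w => ∑ᶠ s, Δ s * g s w}

/-- Hoare preorder on sets of outcome tuples (componentwise order). -/
def HoareLEV {Om : Type} (X Y : Set (Om → ℝ)) : Prop := ∀ x ∈ X, ∃ y ∈ Y, x ≤ y

/-- Smyth preorder on sets of outcome tuples (componentwise order). -/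
def SmythLEV {Om : Type} (X Y : Set (Om → ℝ)) : Prop := ∀ y ∈ Y, ∃ x ∈ X, x ≤ y

/-- The vector-based may-testing preorder `⊑̄^Ω_pmay`. -/
def PMayO {A : Type} (Om : Type) (P Q : PCSP A) : Prop :=
  ∀ T : PCSP (Sum A Om), PWF T → HoareLEV (AO T P) (AO T Q)

/-- The vector-based must-testing preorder `⊑̄^Ω_pmust`. -/
def PMustO {A : Type} (Om : Type) (P Q : PCSP A) : Prop :=
  ∀ T : PCSP (Sum A Om), PWF T → SmythLEV (AO T P) (AO T Q)

/-- The unit outcome vector `ω⃗`. -/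
def unitVec {Om : Type} (w : Om) : Om → ℝ := fun w' => if w' = w then 1 else 0

/-! Occurrence of an action in a process term. -/
mutual
/-- Occurrence of an action in a process term. -/
inductive PUses : {B : Type} → B → PCSP B → Prop where
  | st {B : Type} {b : B} {s} : SUses b s → PUses b (.st s)
  | pchL {B : Type} {b : B} {p P Q} : PUses b P → PUses b (.pch p P Q)
  | pchR {B : Type} {b : B} {p P Q} : PUses b Q → PUses b (.pch p P Q)
inductive SUses : {B : Type} → B → SCSP B → Prop where
  | preAct {B : Type} {b : B} {P} : SUses b (.pre b P)
  | pre {B : Type} {b : B} {a P} : PUses b P → SUses b (.pre a P)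
  | ichL {B : Type} {b : B} {P Q} : PUses b P → SUses b (.ich P Q)
  | ichR {B : Type} {b : B} {P Q} : PUses b Q → SUses b (.ich P Q)
  | echL {B : Type} {b : B} {s t} : SUses b s → SUses b (.ech s t)
  | echR {B : Type} {b : B} {s t} : SUses b t → SUses b (.ech s t)
  | parSet {B : Type} {b : B} {X s t} : b ∈ X → SUses b (.par X s t)
  | parL {B : Type} {b : B} {X s t} : SUses b s → SUses b (.par X s t)
  | parR {B : Type} {b : B} {X s t} : SUses b t → SUses b (.par X s t)
end
/-! ### The modal logic F -/

/-- Modal formulae of the logic `F`. -/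
inductive Form (A : Type) : Type where
  | ref : Set A → Form A
  | dia : A → Form A → Form A
  | conj : (n : ℕ) → (Fin n → Form A) → Form A
  | prob : (n : ℕ) → (Fin n → ℝ) → (Fin n → Form A) → Form A

/-- Well-formed formulae: probabilistic choices carry genuine distributions. -/
inductive WFF {A : Type} : Form A → Prop where
  | ref {X} : WFF (.ref X)
  | dia {a φ} : WFF φ → WFF (.dia a φ)
  | conj {n φs} : (∀ i, WFF (φs i)) → WFF (.conj n φs)
  | prob {n p φs} : (∀ i, 0 ≤ p i) → (∑ i, p i = 1) →
      (∀ i, WFF (φs i)) → WFF (.prob n p φs)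

/-- Formulae of the sublogic `L`: no refusal construct. -/
inductive NoRef {A : Type} : Form A → Prop where
  | dia {a φ} : NoRef φ → NoRef (.dia a φ)
  | conj {n φs} : (∀ i, NoRef (φs i)) → NoRef (.conj n φs)
  | prob {n p φs} : (∀ i, NoRef (φs i)) → NoRef (.prob n p φs)

/-- The satisfaction relation `Δ ⊨ φ`. -/
inductive Sat {A : Type} : Form A → Wt (SCSP A) → Prop where
  | ref {X : Set A} {Δ Δ'} : TauStar Δ Δ' → DRefuses Δ' X → Sat (.ref X) Δ
  | dia {a φ Δ Δ'} : WeakA a Δ Δ' → Sat φ Δ' → Sat (.dia a φ) Δ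
  | conj {n φs Δ} : (∀ i, Sat (φs i) Δ) → Sat (.conj n φs) Δ
  | prob {n} {p : Fin n → ℝ} {φs Δ} (Δs : Fin n → Wt (SCSP A)) :
      (∀ i, Sat (φs i) (Δs i)) →
      TauStar Δ (fun t => ∑ i, p i * Δs i t) →
      Sat (.prob n p φs) Δ

/-- The logical preorder `⊑^L`. -/
def LPre {A : Type} (P Q : PCSP A) : Prop :=
  ∀ φ : Form A, WFF φ → NoRef φ → Sat φ P.interp → Sat φ Q.interp

/-- The logical preorder `⊑^F`. -/
def FPre {A : Type} (P Q : PCSP A) : Prop :=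
  ∀ φ : Form A, WFF φ → Sat φ Q.interp → Sat φ P.interp

mutual
/-- `CharS s φ` : `φ` is an F-characteristic formula `φ_s` of the state `s`. -/
inductive CharS : {A : Type} → SCSP A → Form A → Prop where
  | noTau {A : Type} {s : SCSP A} (n : ℕ) (a : Fin n → A)
      (Δ : Fin n → Wt (SCSP A)) (φ : Fin n → Form A) :
      (∀ Θ, ¬ Step s none Θ) →
      (∀ i, Step s (some (a i)) (Δ i)) →
      (∀ b Θ, Step s (some b) Θ → ∃ i, a i = b ∧ Δ i = Θ) →
      (∀ i, CharD (Δ i) (φ i)) →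
      CharS s (.conj (n+1) (Fin.snoc (fun i => .dia (a i) (φ i))
        (.ref {b : A | ∀ Θ, ¬ Step s (some b) Θ})))
  | tau {A : Type} {s : SCSP A} (n m : ℕ) (a : Fin n → A)
      (Δ : Fin n → Wt (SCSP A)) (φ : Fin n → Form A)
      (Θs : Fin m → Wt (SCSP A)) (ψ : Fin m → Form A) :
      (∃ Θ, Step s none Θ) →
      (∀ i, Step s (some (a i)) (Δ i)) →
      (∀ b Θ, Step s (some b) Θ → ∃ i, a i = b ∧ Δ i = Θ) →
      (∀ j, Step s none (Θs j)) →
      (∀ Θ, Step s none Θ → ∃ j, Θs j = Θ) →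
      (∀ i, CharD (Δ i) (φ i)) →
      (∀ j, CharD (Θs j) (ψ j)) →
      CharS s (.conj (n+m) (Fin.append (fun i => .dia (a i) (φ i)) ψ))
/-- `CharD Δ φ` : `φ` is an F-characteristic formula `φ_Δ` of the distribution `Δ`. -/
inductive CharD : {A : Type} → Wt (SCSP A) → Form A → Prop where
  | mk {A : Type} {Δ : Wt (SCSP A)} (n : ℕ) (s : Fin n → SCSP A) (φ : Fin n → Form A) :
      Function.Injective s →
      (∀ i, s i ∈ dsupp Δ) →
      (∀ t ∈ dsupp Δ, ∃ i, s i = t) →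
      (∀ i, CharS (s i) (φ i)) →
      CharD Δ (.prob n (fun i => Δ (s i)) φ)
end

mutual
/-- `CharSL s ψ` : `ψ` is an L-characteristic formula `ψ_s` of the state `s`. -/
inductive CharSL : {A : Type} → SCSP A → Form A → Prop where
  | noTau {A : Type} {s : SCSP A} (n : ℕ) (a : Fin n → A)
      (Δ : Fin n → Wt (SCSP A)) (φ : Fin n → Form A) :
      (∀ Θ, ¬ Step s none Θ) →
      (∀ i, Step s (some (a i)) (Δ i)) →
      (∀ b Θ, Step s (some b) Θ → ∃ i, a i = b ∧ Δ i = Θ) →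
      (∀ i, CharDL (Δ i) (φ i)) →
      CharSL s (.conj n (fun i => .dia (a i) (φ i)))
  | tau {A : Type} {s : SCSP A} (n m : ℕ) (a : Fin n → A)
      (Δ : Fin n → Wt (SCSP A)) (φ : Fin n → Form A)
      (Θs : Fin m → Wt (SCSP A)) (ψ : Fin m → Form A) :
      (∃ Θ, Step s none Θ) →
      (∀ i, Step s (some (a i)) (Δ i)) →
      (∀ b Θ, Step s (some b) Θ → ∃ i, a i = b ∧ Δ i = Θ) →
      (∀ j, Step s none (Θs j)) →
      (∀ Θ, Step s none Θ → ∃ j, Θs j = Θ) →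
      (∀ i, CharDL (Δ i) (φ i)) →
      (∀ j, CharDL (Θs j) (ψ j)) →
      CharSL s (.conj (n+m) (Fin.append (fun i => .dia (a i) (φ i)) ψ))
/-- `CharDL Δ ψ` : `ψ` is an L-characteristic formula `ψ_Δ` of the distribution `Δ`. -/
inductive CharDL : {A : Type} → Wt (SCSP A) → Form A → Prop where
  | mk {A : Type} {Δ : Wt (SCSP A)} (n : ℕ) (s : Fin n → SCSP A) (φ : Fin n → Form A) :
      Function.Injective s →
      (∀ i, s i ∈ dsupp Δ) →
      (∀ t ∈ dsupp Δ, ∃ i, s i = t) →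
      (∀ i, CharSL (s i) (φ i)) →
      CharDL Δ (.prob n (fun i => Δ (s i)) φ)
end
/-! ### The sub-language nCSP and (in)equational theories -/

mutual
/-- Membership in `nCSP`: no parallel composition. -/
inductive PNoPar : {A : Type} → PCSP A → Prop where
  | st {A : Type} {s : SCSP A} : SNoPar s → PNoPar (.st s)
  | pch {A : Type} {p : ℝ} {P Q : PCSP A} : PNoPar P → PNoPar Q → PNoPar (.pch p P Q)
inductive SNoPar : {A : Type} → SCSP A → Prop where
  | nil {A : Type} : SNoPar (SCSP.nil (A := A))
  | pre {A : Type} {a : A} {P} : PNoPar P → SNoPar (.pre a P)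
  | ich {A : Type} {P Q : PCSP A} : PNoPar P → PNoPar Q → SNoPar (.ich P Q)
  | ech {A : Type} {s t : SCSP A} : SNoPar s → SNoPar t → SNoPar (.ech s t)
end

/-- Initial actions of a state-based term (`none` denotes τ). -/
def initsS {A : Type} : SCSP A → Set (Option A)
  | .nil => ∅
  | .pre a _ => {some a}
  | .ich _ _ => {none}
  | .ech s t => initsS s ∪ initsS t
  | .par _ s t => initsS s ∪ initsS t

/-- Initial actions of a process term. -/
def initsP {A : Type} : PCSP A → Set (Option A)
  | .st s => initsS s
  | .pch _ P Q => initsP P ∪ initsP Q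

/-- Derivability in the equational theory `=_E` of Figure 3. -/
inductive EqE {A : Type} : PCSP A → PCSP A → Prop where
  | refl (P) : EqE P P
  | symm {P Q} : EqE P Q → EqE Q P
  | trans {P Q R} : EqE P Q → EqE Q R → EqE P R
  | congPre (a : A) {P Q} : EqE P Q → EqE (.st (.pre a P)) (.st (.pre a Q))
  | congIch {P₁ P₂ Q₁ Q₂} : EqE P₁ Q₁ → EqE P₂ Q₂ →
      EqE (.st (.ich P₁ P₂)) (.st (.ich Q₁ Q₂))
  | congEch {P₁ P₂ Q₁ Q₂} : EqE P₁ Q₁ → EqE P₂ Q₂ →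
      EqE (echC P₁ P₂) (echC Q₁ Q₂)
  | congPch (p : ℝ) {P₁ P₂ Q₁ Q₂} : EqE P₁ Q₁ → EqE P₂ Q₂ →
      EqE (.pch p P₁ P₂) (.pch p Q₁ Q₂)
  | P1 (p : ℝ) (h₀ : 0 < p) (h₁ : p < 1) (P) : EqE (.pch p P P) P
  | P2 (p : ℝ) (h₀ : 0 < p) (h₁ : p < 1) (P Q) :
      EqE (.pch p P Q) (.pch (1-p) Q P)
  | P3 (p q : ℝ) (hp₀ : 0 < p) (hp₁ : p < 1) (hq₀ : 0 < q) (hq₁ : q < 1) (P Q R) :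
      EqE (.pch q (.pch p P Q) R)
          (.pch (p*q) P (.pch ((1-p)*q/(1-p*q)) Q R))
  | I1 (P) : EqE (.st (.ich P P)) P
  | I2 (P Q) : EqE (.st (.ich P Q)) (.st (.ich Q P))
  | I3 (P Q R) : EqE (.st (.ich (.st (.ich P Q)) R)) (.st (.ich P (.st (.ich Q R))))
  | E1 (P) : EqE (echC P (.st .nil)) P
  | E2 (P Q) : EqE (echC P Q) (echC Q P)
  | E3 (P Q R) : EqE (echC (echC P Q) R) (echC P (echC Q R))
  | EI (a : A) (P Q) :
      EqE (echC (.st (.pre a P)) (.st (.pre a Q)))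
          (.st (.ich (.st (.pre a P)) (.st (.pre a Q))))
  | D1 (p : ℝ) (h₀ : 0 < p) (h₁ : p < 1) (P Q R) :
      EqE (echC P (.pch p Q R)) (.pch p (echC P Q) (echC P R))
  | D2 (a : A) (P Q R) :
      EqE (echC (.st (.pre a P)) (.st (.ich Q R)))
          (.st (.ich (echC (.st (.pre a P)) Q) (echC (.st (.pre a P)) R)))
  | D3 (P₁ P₂ Q₁ Q₂) :
      EqE (echC (.st (.ich P₁ P₂)) (.st (.ich Q₁ Q₂)))
          (.st (.ich
            (.st (.ich (echC P₁ (.st (.ich Q₁ Q₂))) (echC P₂ (.st (.ich Q₁ Q₂)))))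
            (.st (.ich (echC (.st (.ich P₁ P₂)) Q₁) (echC (.st (.ich P₁ P₂)) Q₂)))))

/-- Derivability from the probabilistic axioms P1–P3 and D1 only (`=_prob`). -/
inductive EqProb {A : Type} : PCSP A → PCSP A → Prop where
  | refl (P) : EqProb P P
  | symm {P Q} : EqProb P Q → EqProb Q P
  | trans {P Q R} : EqProb P Q → EqProb Q R → EqProb P R
  | congPre (a : A) {P Q} : EqProb P Q → EqProb (.st (.pre a P)) (.st (.pre a Q))
  | congIch {P₁ P₂ Q₁ Q₂} : EqProb P₁ Q₁ → EqProb P₂ Q₂ →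
      EqProb (.st (.ich P₁ P₂)) (.st (.ich Q₁ Q₂))
  | congEch {P₁ P₂ Q₁ Q₂} : EqProb P₁ Q₁ → EqProb P₂ Q₂ →
      EqProb (echC P₁ P₂) (echC Q₁ Q₂)
  | congPch (p : ℝ) {P₁ P₂ Q₁ Q₂} : EqProb P₁ Q₁ → EqProb P₂ Q₂ →
      EqProb (.pch p P₁ P₂) (.pch p Q₁ Q₂)
  | P1 (p : ℝ) (h₀ : 0 < p) (h₁ : p < 1) (P) : EqProb (.pch p P P) P
  | P2 (p : ℝ) (h₀ : 0 < p) (h₁ : p < 1) (P Q) :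
      EqProb (.pch p P Q) (.pch (1-p) Q P)
  | P3 (p q : ℝ) (hp₀ : 0 < p) (hp₁ : p < 1) (hq₀ : 0 < q) (hq₁ : q < 1) (P Q R) :
      EqProb (.pch q (.pch p P Q) R)
          (.pch (p*q) P (.pch ((1-p)*q/(1-p*q)) Q R))
  | D1 (p : ℝ) (h₀ : 0 < p) (h₁ : p < 1) (P Q R) :
      EqProb (echC P (.pch p Q R)) (.pch p (echC P Q) (echC P R))

mutual
/-- Normal forms. -/
inductive IsNF : {A : Type} → PCSP A → Prop where
  | pch {A : Type} {p : ℝ} {N₁ N₂ : PCSP A} : 0 < p → p < 1 →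
      IsNF N₁ → IsNF N₂ → IsNF (.pch p N₁ N₂)
  | ich {A : Type} {N₁ N₂ : PCSP A} : IsNF N₁ → IsNF N₂ → IsNF (.st (.ich N₁ N₂))
  | ext {A : Type} {s : SCSP A} : IsExtNF s → IsNF (.st s)
/-- External-choice normal forms `◻_{i∈I} a_i.N_i`. -/
inductive IsExtNF : {A : Type} → SCSP A → Prop where
  | nil {A : Type} : IsExtNF (SCSP.nil (A := A))
  | pre {A : Type} {a : A} {N} : IsNF N → IsExtNF (.pre a N)
  | ech {A : Type} {s t : SCSP A} : IsExtNF s → IsExtNF t → IsExtNF (.ech s t)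
end

/-- Derivability in the inequational theory for may testing (`⊑_Emay`). -/
inductive LeMay {A : Type} : PCSP A → PCSP A → Prop where
  | ofEq {P Q} : EqE P Q → LeMay P Q
  | trans {P Q R} : LeMay P Q → LeMay Q R → LeMay P R
  | congPre (a : A) {P Q} : LeMay P Q → LeMay (.st (.pre a P)) (.st (.pre a Q))
  | congIch {P₁ P₂ Q₁ Q₂} : LeMay P₁ Q₁ → LeMay P₂ Q₂ →
      LeMay (.st (.ich P₁ P₂)) (.st (.ich Q₁ Q₂))
  | congEch {P₁ P₂ Q₁ Q₂} : LeMay P₁ Q₁ → LeMay P₂ Q₂ →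
      LeMay (echC P₁ P₂) (echC Q₁ Q₂)
  | congPch (p : ℝ) {P₁ P₂ Q₁ Q₂} : LeMay P₁ Q₁ → LeMay P₂ Q₂ →
      LeMay (.pch p P₁ P₂) (.pch p Q₁ Q₂)
  | may0 (a b : A) (P Q) :
      LeMay (echC (.st (.pre a P)) (.st (.pre b Q)))
            (.st (.ich (.st (.pre a P)) (.st (.pre b Q))))
  | may0' (a b : A) (P Q) :
      LeMay (.st (.ich (.st (.pre a P)) (.st (.pre b Q))))
            (echC (.st (.pre a P)) (.st (.pre b Q)))
  | may1 (P Q) : LeMay P (.st (.ich P Q))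
  | may2 (P) : LeMay (.st .nil) P
  | may3 (a : A) (p : ℝ) (h₀ : 0 < p) (h₁ : p < 1) (P Q) :
      LeMay (.st (.pre a (.pch p P Q))) (.pch p (.st (.pre a P)) (.st (.pre a Q)))

/-- Derivability in the inequational theory for must testing (`⊑_Emust`). -/
inductive LeMust {A : Type} : PCSP A → PCSP A → Prop where
  | ofEq {P Q} : EqE P Q → LeMust P Q
  | trans {P Q R} : LeMust P Q → LeMust Q R → LeMust P R
  | congPre (a : A) {P Q} : LeMust P Q → LeMust (.st (.pre a P)) (.st (.pre a Q))
  | congIch {P₁ P₂ Q₁ Q₂} : LeMust P₁ Q₁ → LeMust P₂ Q₂ →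
      LeMust (.st (.ich P₁ P₂)) (.st (.ich Q₁ Q₂))
  | congEch {P₁ P₂ Q₁ Q₂} : LeMust P₁ Q₁ → LeMust P₂ Q₂ →
      LeMust (echC P₁ P₂) (echC Q₁ Q₂)
  | congPch (p : ℝ) {P₁ P₂ Q₁ Q₂} : LeMust P₁ Q₁ → LeMust P₂ Q₂ →
      LeMust (.pch p P₁ P₂) (.pch p Q₁ Q₂)
  | must1 (P Q) : LeMust (.st (.ich P Q)) Q
  | must2 (n : ℕ) (a : Fin (n+1) → A) (m : Fin (n+1) → ℕ)
      (p : (i : Fin (n+1)) → Fin (m i + 1) → ℝ)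
      (Q : (i : Fin (n+1)) → Fin (m i + 1) → PCSP A)
      (P : (i : Fin (n+1)) → Fin (m i + 1) → PCSP A)
      (R : PCSP A) :
      (∀ i j, 0 ≤ p i j) → (∀ i, ∑ j, p i j = 1) →
      initsP R ⊆ {α | ∃ i, α = some (a i)} →
      LeMust
        (.st (.ich R (ichFin n (fun i =>
          pchFin (m i) (p i) (fun j => echC (.st (.pre (a i) (Q i j))) (P i j))))))
        (.st (echFin n (fun i => .pre (a i) (pchFin (m i) (p i) (Q i)))))

/-! A well-formed state `s` is related to every distribution satisfying one of its
characteristic formulae `φ_s`, and this relation is a (failure) simulation. A transition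
`s --α--> Δ` contributed a conjunct `⟨α⟩φ_Δ` (or `φ_Δ` for `τ`) to `φ_s`, so a satisfying `Θ`
weakly does `α` to some `Θ'` satisfying `φ_Δ`; and satisfying `φ_Δ = ⊕ Δ(t)·φ_t` means
τ-reaching a combination `Σ Δ(t)·Θ_t` with `Θ_t ⊨ φ_t`, which is precisely a lifting of the
relation to `Δ`. A stable `s` refusing `X` has the conjunct `ref({a | s ↛a})`, and
`X ⊆ {a | s ↛a}`. Well-formedness makes all transition targets genuine distributions, as
the lifting requires. -/

section Distributions
variable {X Y : Type}

lemma dsupp_dirac (x : X) : dsupp (dirac x) = {x} := by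
  ext y
  by_cases h : y = x <;> simp [dsupp, dirac, h]

lemma isDist_dirac (x : X) : IsDist (dirac x) := by
  refine ⟨fun y => ?_, by simp [dsupp_dirac], ?_⟩
  · unfold dirac; split_ifs <;> norm_num
  · rw [finsum_eq_single _ x fun y hy => by simp [dirac, hy]]
    simp [dirac]

lemma dsupp_convex_subset (Δ Θ : Wt X) (p : ℝ) :
    dsupp (fun t => p * Δ t + (1 - p) * Θ t) ⊆ dsupp Δ ∪ dsupp Θ :=
  (Function.support_add _ _).trans <| Set.union_subset_union
    (Function.support_mul_subset_right _ _) (Function.support_mul_subset_right _ _)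

lemma IsDist.convex {Δ Θ : Wt X} (hΔ : IsDist Δ) (hΘ : IsDist Θ) {p : ℝ}
    (hp₀ : 0 ≤ p) (hp₁ : p ≤ 1) : IsDist fun t => p * Δ t + (1 - p) * Θ t := by
  obtain ⟨hΔ₀, hΔf, hΔ₁⟩ := hΔ
  obtain ⟨hΘ₀, hΘf, hΘ₁⟩ := hΘ
  refine ⟨fun x => add_nonneg (mul_nonneg hp₀ (hΔ₀ x)) (mul_nonneg (sub_nonneg.2 hp₁) (hΘ₀ x)),
    (hΔf.union hΘf).subset (dsupp_convex_subset Δ Θ p), ?_⟩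
  rw [finsum_add_distrib (hΔf.subset (Function.support_mul_subset_right _ _))
    (hΘf.subset (Function.support_mul_subset_right _ _)),
    ← mul_finsum, ← mul_finsum, hΔ₁, hΘ₁]
  ring

lemma dmap_apply_of_injective {g : X → Y} (hg : Function.Injective g) (Δ : Wt X) (x : X) :
    dmap g Δ (g x) = Δ x := by
  have : {x' | g x' = g x} = {x} := Set.ext fun x' => hg.eq_iff
  rw [dmap, this, finsum_mem_singleton]

lemma dsupp_dmap_subset (g : X → Y) (Δ : Wt X) : dsupp (dmap g Δ) ⊆ g '' dsupp Δ := by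
  intro y hy
  by_contra h
  refine hy (finsum_mem_of_eqOn_zero fun x (hx : g x = y) => ?_)
  by_contra hΔx
  exact h ⟨x, hΔx, hx⟩

lemma isDist_dmap {g : X → Y} (hg : Function.Injective g) {Δ : Wt X} (hΔ : IsDist Δ) :
    IsDist (dmap g Δ) := by
  obtain ⟨hΔ₀, hΔf, hΔ₁⟩ := hΔ
  refine ⟨fun y => finsum_nonneg fun x => finsum_nonneg fun _ => hΔ₀ x,
    (hΔf.image g).subset (dsupp_dmap_subset g Δ), ?_⟩
  have hrange : Function.support (dmap g Δ) ⊆ Set.range g :=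
    (dsupp_dmap_subset g Δ).trans (Set.image_subset_range g _)
  rw [← Set.indicator_eq_self.2 hrange, ← finsum_mem_def, finsum_mem_range hg]
  simpa only [dmap_apply_of_injective hg] using hΔ₁

lemma IsDist.prod {Δ₁ : Wt X} {Δ₂ : Wt Y} (h₁ : IsDist Δ₁) (h₂ : IsDist Δ₂) :
    IsDist fun q : X × Y => Δ₁ q.1 * Δ₂ q.2 := by
  obtain ⟨h₁₀, h₁f, h₁₁⟩ := h₁
  obtain ⟨h₂₀, h₂f, h₂₁⟩ := h₂
  have hsub : dsupp (fun q : X × Y => Δ₁ q.1 * Δ₂ q.2) ⊆ dsupp Δ₁ ×ˢ dsupp Δ₂ :=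
    fun q hq => ⟨left_ne_zero_of_mul hq, right_ne_zero_of_mul hq⟩
  refine ⟨fun q => mul_nonneg (h₁₀ q.1) (h₂₀ q.2), (h₁f.prod h₂f).subset hsub, ?_⟩
  rw [finsum_curry _ ((h₁f.prod h₂f).subset hsub)]
  simp_rw [← mul_finsum, h₂₁, mul_one, h₁₁]

end Distributions

lemma IsDist.lift_of_enum {A : Type} {R : SCSP A → Wt (SCSP A) → Prop} {Δ : Wt (SCSP A)}
    (hΔ : IsDist Δ) {n : ℕ} {s : Fin n → SCSP A} (hinj : Function.Injective s)
    (hmem : ∀ i, s i ∈ dsupp Δ) (hcov : ∀ t ∈ dsupp Δ, ∃ i, s i = t)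
    {Φ : Fin n → Wt (SCSP A)} (hR : ∀ i, R (s i) (Φ i)) :
    Lift R Δ (fun t => ∑ i, Δ (s i) * Φ i t) := by
  obtain ⟨hΔ₀, -, hΔ₁⟩ := hΔ
  have hsupp : Function.support Δ ⊆ ↑(Finset.univ.image s) := by
    intro t ht
    obtain ⟨i, rfl⟩ := hcov t ht
    simp
  have hsum : ∑ i, Δ (s i) = 1 := by
    rw [← Finset.sum_image fun i _ j _ h => hinj h, ← finsum_eq_sum_of_support_subset Δ hsupp, hΔ₁]
  refine ⟨n, fun i => Δ (s i), s, Φ, fun i => hΔ₀ _, hsum, ?_, hR, rfl⟩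
  funext t
  by_cases ht : t ∈ dsupp Δ
  · obtain ⟨i₀, rfl⟩ := hcov t ht
    rw [Finset.sum_eq_single i₀ (fun i _ hi => by simp [dirac, hinj.ne hi.symm]) (by simp)]
    simp [dirac]
  · have hne : ∀ i, t ≠ s i := fun i h => ht (h ▸ hmem i)
    simp only [dsupp, Function.mem_support, not_not] at ht
    simp [ht, dirac, hne]

section WellFormed
variable {A : Type}

def IsWFDist (Δ : Wt (SCSP A)) : Prop := IsDist Δ ∧ ∀ t ∈ dsupp Δ, SWF t

lemma isWFDist_dmap {X : Type} {g : X → SCSP A} (hg : Function.Injective g) {Δ : Wt X}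
    (hΔ : IsDist Δ) (hwf : ∀ x ∈ dsupp Δ, SWF (g x)) : IsWFDist (dmap g Δ) := by
  refine ⟨isDist_dmap hg hΔ, fun t ht => ?_⟩
  obtain ⟨x, hx, rfl⟩ := dsupp_dmap_subset g Δ ht
  exact hwf x hx

lemma PWF.isWFDist_interp : ∀ {P : PCSP A}, PWF P → IsWFDist P.interp
  | .st s, .st hs => ⟨isDist_dirac s, fun t ht => by
      rw [PCSP.interp, dsupp_dirac, Set.mem_singleton_iff] at ht
      exact ht ▸ hs⟩
  | .pch p P Q, .pch hp₀ hp₁ hP hQ => by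
      obtain ⟨hPd, hPwf⟩ := hP.isWFDist_interp
      obtain ⟨hQd, hQwf⟩ := hQ.isWFDist_interp
      refine ⟨hPd.convex hQd hp₀.le hp₁.le, fun t ht => ?_⟩
      rcases dsupp_convex_subset _ _ p ht with h | h
      exacts [hPwf t h, hQwf t h]

lemma SWF.isWFDist_of_step {s : SCSP A} {α : Option A} {Δ : Wt (SCSP A)}
    (hs : SWF s) (h : Step s α Δ) : IsWFDist Δ := by
  induction h with
  | pre a P => cases hs with | pre hP => exact hP.isWFDist_interp
  | ichL P Q => cases hs with | ich hP _ => exact hP.isWFDist_interp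
  | ichR P Q => cases hs with | ich _ hQ => exact hQ.isWFDist_interp
  | echL _ ih => cases hs with | ech h₁ _ => exact ih h₁
  | echR _ ih => cases hs with | ech _ h₂ => exact ih h₂
  | echTL _ ih =>
    cases hs with
    | ech h₁ h₂ =>
      obtain ⟨hd, hwf⟩ := ih h₁
      exact isWFDist_dmap (fun _ _ h => by injection h) hd fun t ht => .ech (hwf t ht) h₂
  | echTR _ ih =>
    cases hs with
    | ech h₁ h₂ =>
      obtain ⟨hd, hwf⟩ := ih h₂
      exact isWFDist_dmap (fun _ _ h => by injection h) hd fun t ht => .ech h₁ (hwf t ht)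
  | parL _ _ ih =>
    cases hs with
    | par h₁ h₂ =>
      obtain ⟨hd, hwf⟩ := ih h₁
      exact isWFDist_dmap (fun _ _ h => by injection h) hd fun t ht => .par (hwf t ht) h₂
  | parR _ _ ih =>
    cases hs with
    | par h₁ h₂ =>
      obtain ⟨hd, hwf⟩ := ih h₂
      exact isWFDist_dmap (fun _ _ h => by injection h) hd fun t ht => .par h₁ (hwf t ht)
  | parS _ _ _ ih₁ ih₂ =>
    cases hs with
    | par h₁ h₂ =>
      obtain ⟨hd₁, hwf₁⟩ := ih₁ h₁
      obtain ⟨hd₂, hwf₂⟩ := ih₂ h₂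
      refine isWFDist_dmap (fun _ _ h => ?_) (hd₁.prod hd₂) fun q hq =>
        .par (hwf₁ _ (left_ne_zero_of_mul hq)) (hwf₂ _ (right_ne_zero_of_mul hq))
      injection h with _ h₁ h₂
      exact Prod.ext h₁ h₂

end WellFormed

section Characteristic
variable {A : Type}

lemma Lift.mono {R R' : SCSP A → Wt (SCSP A) → Prop} (h : ∀ s Θ, R s Θ → R' s Θ)
    {Δ Θ : Wt (SCSP A)} (hR : Lift R Δ Θ) : Lift R' Δ Θ := by
  obtain ⟨n, p, s, Φ, hp₀, hp₁, hΔ, hsR, hΘ⟩ := hR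
  exact ⟨n, p, s, Φ, hp₀, hp₁, hΔ, fun i => h _ _ (hsR i), hΘ⟩

lemma Weak.trans_tauStar {α : Option A} {Δ Θ Θ' : Wt (SCSP A)} (h : Weak α Δ Θ)
    (h' : TauStar Θ Θ') : Weak α Δ Θ' := by
  cases α with
  | none => exact Relation.ReflTransGen.trans h h'
  | some a =>
    obtain ⟨Δ₁, Δ₂, h₁, h₂, h₃⟩ := h
    exact ⟨Δ₁, Δ₂, h₁, h₂, h₃.trans h'⟩

lemma Sat.exists_weak_of_dia {a : A} {φ : Form A} {Θ : Wt (SCSP A)} (h : Sat (.dia a φ) Θ) :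
    ∃ Θ', Weak (some a) Θ Θ' ∧ Sat φ Θ' := by
  cases h with
  | dia hweak hsat => exact ⟨_, hweak, hsat⟩

def CharSat (C : SCSP A → Form A → Prop) (t : SCSP A) (Θ : Wt (SCSP A)) : Prop :=
  SWF t ∧ ∃ φ, C t φ ∧ Sat φ Θ

lemma IsDist.exists_tauStar_lift_of_sat_prob {R : SCSP A → Wt (SCSP A) → Prop}
    {Δ Θ : Wt (SCSP A)} (hΔ : IsDist Δ) {n : ℕ} {s : Fin n → SCSP A}
    (hinj : Function.Injective s) (hmem : ∀ i, s i ∈ dsupp Δ)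
    (hcov : ∀ t ∈ dsupp Δ, ∃ i, s i = t) {φ : Fin n → Form A}
    (hR : ∀ i Θ', Sat (φ i) Θ' → R (s i) Θ') (hsat : Sat (.prob n (fun i => Δ (s i)) φ) Θ) :
    ∃ Θ', TauStar Θ Θ' ∧ Lift R Δ Θ' := by
  cases hsat with
  | prob Θs hsat hτ => exact ⟨_, hτ, hΔ.lift_of_enum hinj hmem hcov fun i => hR i _ (hsat i)⟩

lemma CharD.exists_tauStar_lift {Δ Θ : Wt (SCSP A)} {φ : Form A} (hc : CharD Δ φ)
    (hΔ : IsWFDist Δ) (hsat : Sat φ Θ) : ∃ Θ', TauStar Θ Θ' ∧ Lift (CharSat CharS) Δ Θ' := by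
  cases hc with
  | mk n s φ hinj hmem hcov hchar =>
    exact hΔ.1.exists_tauStar_lift_of_sat_prob hinj hmem hcov
      (fun i _ h => ⟨hΔ.2 _ (hmem i), φ i, hchar i, h⟩) hsat

lemma CharDL.exists_tauStar_lift {Δ Θ : Wt (SCSP A)} {φ : Form A} (hc : CharDL Δ φ)
    (hΔ : IsWFDist Δ) (hsat : Sat φ Θ) : ∃ Θ', TauStar Θ Θ' ∧ Lift (CharSat CharSL) Δ Θ' := by
  cases hc with
  | mk n s φ hinj hmem hcov hchar =>
    exact hΔ.1.exists_tauStar_lift_of_sat_prob hinj hmem hcov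
      (fun i _ h => ⟨hΔ.2 _ (hmem i), φ i, hchar i, h⟩) hsat

lemma CharS.exists_weak_sat_of_step {t : SCSP A} {φ : Form A} {Θ : Wt (SCSP A)}
    {α : Option A} {Δ : Wt (SCSP A)} (hc : CharS t φ) (hsat : Sat φ Θ) (hstep : Step t α Δ) :
    ∃ ψ Θ', CharD Δ ψ ∧ Weak α Θ Θ' ∧ Sat ψ Θ' := by
  cases hc with
  | noTau n a Δs φs hnoτ _ hcompl hchar =>
    cases hsat with
    | conj hall =>
      cases α with
      | none => exact absurd hstep (hnoτ Δ)
      | some b =>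
        obtain ⟨i, rfl, rfl⟩ := hcompl b Δ hstep
        have hdia := hall (Fin.castSucc i)
        rw [Fin.snoc_castSucc] at hdia
        obtain ⟨Θ', hweak, hsat'⟩ := hdia.exists_weak_of_dia
        exact ⟨_, Θ', hchar i, hweak, hsat'⟩
  | tau n m a Δs φs Θs ψs _ _ hcompl _ hcomplτ hchar hcharτ =>
    cases hsat with
    | conj hall =>
      cases α with
      | none =>
        obtain ⟨j, rfl⟩ := hcomplτ Δ hstep
        have hψ := hall (Fin.natAdd n j)
        rw [Fin.append_right] at hψ
        exact ⟨_, Θ, hcharτ j, Relation.ReflTransGen.refl, hψ⟩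
      | some b =>
        obtain ⟨i, rfl, rfl⟩ := hcompl b Δ hstep
        have hdia := hall (Fin.castAdd m i)
        rw [Fin.append_left] at hdia
        obtain ⟨Θ', hweak, hsat'⟩ := hdia.exists_weak_of_dia
        exact ⟨_, Θ', hchar i, hweak, hsat'⟩

lemma CharSL.exists_weak_sat_of_step {t : SCSP A} {φ : Form A} {Θ : Wt (SCSP A)}
    {α : Option A} {Δ : Wt (SCSP A)} (hc : CharSL t φ) (hsat : Sat φ Θ) (hstep : Step t α Δ) :
    ∃ ψ Θ', CharDL Δ ψ ∧ Weak α Θ Θ' ∧ Sat ψ Θ' := by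
  cases hc with
  | noTau n a Δs φs hnoτ _ hcompl hchar =>
    cases hsat with
    | conj hall =>
      cases α with
      | none => exact absurd hstep (hnoτ Δ)
      | some b =>
        obtain ⟨i, rfl, rfl⟩ := hcompl b Δ hstep
        obtain ⟨Θ', hweak, hsat'⟩ := (hall i).exists_weak_of_dia
        exact ⟨_, Θ', hchar i, hweak, hsat'⟩
  | tau n m a Δs φs Θs ψs _ _ hcompl _ hcomplτ hchar hcharτ =>
    cases hsat with
    | conj hall =>
      cases α with
      | none =>
        obtain ⟨j, rfl⟩ := hcomplτ Δ hstep
        have hψ := hall (Fin.natAdd n j)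
        rw [Fin.append_right] at hψ
        exact ⟨_, Θ, hcharτ j, Relation.ReflTransGen.refl, hψ⟩
      | some b =>
        obtain ⟨i, rfl, rfl⟩ := hcompl b Δ hstep
        have hdia := hall (Fin.castAdd m i)
        rw [Fin.append_left] at hdia
        obtain ⟨Θ', hweak, hsat'⟩ := hdia.exists_weak_of_dia
        exact ⟨_, Θ', hchar i, hweak, hsat'⟩

lemma CharS.exists_tauStar_dRefuses {t : SCSP A} {φ : Form A} {Θ : Wt (SCSP A)} {X : Set A}
    (hc : CharS t φ) (hsat : Sat φ Θ) (href : SRefuses t X) :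
    ∃ Θ', TauStar Θ Θ' ∧ DRefuses Θ' X := by
  cases hc with
  | tau _ _ _ _ _ _ _ hτ => exact absurd hτ.choose_spec (href.1 _)
  | noTau n _ _ _ _ _ _ _ =>
    cases hsat with
    | conj hall =>
      have hrefConj := hall (Fin.last n)
      rw [Fin.snoc_last] at hrefConj
      cases hrefConj with
      | ref hτ hD =>
        exact ⟨_, hτ, fun u hu => ⟨(hD u hu).1, fun b hb => (hD u hu).2 b (href.2 b hb)⟩⟩

lemma isSimulation_charSat {C : SCSP A → Form A → Prop} {D : Wt (SCSP A) → Form A → Prop}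
    (hstep : ∀ {t φ Θ α Δ}, C t φ → Sat φ Θ → Step t α Δ →
      ∃ ψ Θ', D Δ ψ ∧ Weak α Θ Θ' ∧ Sat ψ Θ')
    (hlift : ∀ {Δ ψ Θ}, D Δ ψ → IsWFDist Δ → Sat ψ Θ →
      ∃ Θ', TauStar Θ Θ' ∧ Lift (CharSat C) Δ Θ') :
    IsSimulation (CharSat C) := by
  rintro t Θ α Δ ⟨ht, φ, hc, hsat⟩ hs
  obtain ⟨ψ, Θ₁, hD, hweak, hsat₁⟩ := hstep hc hsat hs
  obtain ⟨Θ', hτ, hΘ'⟩ := hlift hD (ht.isWFDist_of_step hs) hsat₁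
  exact ⟨Θ', hweak.trans_tauStar hτ, hΘ'⟩

lemma isFailureSim_charSat_charS : IsFailureSim (CharSat (CharS (A := A))) :=
  ⟨isSimulation_charSat CharS.exists_weak_sat_of_step CharD.exists_tauStar_lift,
    fun _ _ _ ⟨_, _, hc, hsat⟩ href => hc.exists_tauStar_dRefuses hsat href⟩

lemma isSimulation_charSat_charSL : IsSimulation (CharSat (CharSL (A := A))) :=
  isSimulation_charSat CharSL.exists_weak_sat_of_step CharDL.exists_tauStar_lift

end Characteristic

/-- Lemma 6.8: satisfying a characteristic formula entails the
corresponding simulation preorder. -/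
theorem characteristic_formula_implies_simulation (A : Type) [Fintype A]
    (P Q : PCSP A) (hP : PWF P) (hQ : PWF Q) :
    ((∃ φ : Form A, CharD Q.interp φ ∧ Sat φ P.interp) → FSimPre P Q) ∧
    ((∃ ψ : Form A, CharDL P.interp ψ ∧ Sat ψ Q.interp) → SimPre P Q) := by
  constructor
  · rintro ⟨φ, hc, hsat⟩
    obtain ⟨Θ, hτ, hΘ⟩ := hc.exists_tauStar_lift hQ.isWFDist_interp hsat
    exact ⟨Θ, hτ, hΘ.mono fun _ _ h => ⟨_, isFailureSim_charSat_charS, h⟩⟩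
  · rintro ⟨ψ, hc, hsat⟩
    obtain ⟨Θ, hτ, hΘ⟩ := hc.exists_tauStar_lift hP.isWFDist_interp hsat
    exact ⟨Θ, hτ, hΘ.mono fun _ _ h => ⟨_, isSimulation_charSat_charSL, h⟩⟩

end PaperPCSP
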